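/- Let W be a set of vertices of G₂ with |W| < ∏_{i=1}^{m−1} (p_i − 1). Then the graph G₂ − W obtained by deleting the vertices of W is connected, every vertex of G₂ − W is at distance at most 2 (in G₂ − W) from some vertex of X_{{m}} not in W, and the diameter of G₂ − W is at most 4. -/

import Mathlib

/-!
By the Chinese remainder theorem an element `x` of `ℤ/nℤ` is its tuple of residues, so the
vertices of `G₂` are the `x` with `∅ ≠ Z(x) ≠ {1,…,m}`, and `x, y` are adjacent as soon as
`Z(x) ∩ Z(y) = ∅`. The class `X_{{j}}` has `∏_{i ≠ j} (p_i - 1)` elements, least for `j = m`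
since `p` is increasing, so every `X_{{j}}` meets the complement of `W`. Fix `u ∈ X_{{m}} \ W`.
A vertex `v` with `m ∉ Z(v)` is adjacent to `u`; otherwise choose `k ∉ Z(v)` and
`w ∈ X_{{k}} \ W`, and `v - w - u` is a path. So every vertex lies within distance 2 of `u`.
-/

open Finset

abbrev NN (m : ℕ) (p : Fin m → ℕ) : ℕ := ∏ i, p i

abbrev Vtx (m : ℕ) (p : Fin m → ℕ) : Type :=
  {x : ZMod (NN m p) // x ≠ 0 ∧ ¬ IsUnit x}

/-- The induced subgraph `G₂` of the comaximal graph of `ℤ/nℤ` on nonzero nonunits. -/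
def G2 (m : ℕ) (p : Fin m → ℕ) : SimpleGraph (Vtx m p) where
  Adj x y := x ≠ y ∧ Ideal.span ({x.1, y.1} : Set (ZMod (NN m p))) = ⊤
  symm := by
    constructor
    rintro x y ⟨hxy, h⟩
    exact ⟨hxy.symm, by rwa [Set.pair_comm]⟩
  loopless := by constructor; rintro x ⟨h, -⟩; exact h rfl

/-- The zero-set of `x`: indices `i` where the image of `x` in `ℤ/p_iℤ` is zero. -/
def Z (m : ℕ) (p : Fin m → ℕ) (x : ZMod (NN m p)) : Finset (Fin m) :=
  Finset.univ.filter fun i =>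
    (ZMod.castHom (Finset.dvd_prod_of_mem p (Finset.mem_univ i)) (ZMod (p i))) x = 0

/-- The class `X_S` of vertices of `G₂` with zero-set `S`. -/
def XS (m : ℕ) (p : Fin m → ℕ) (S : Finset (Fin m)) : Set (Vtx m p) :=
  {x | Z m p x.1 = S}

/-- Diameter: the maximum over all pairs of vertices of the graph distance. -/
noncomputable def gdiam {V : Type*} (G : SimpleGraph V) : ℕ :=
  sSup {d | ∃ x y, G.dist x y = d}

lemma Pi.isCoprime_of_forall_ne_zero {ι : Type*} {K : ι → Type*} [∀ i, Field (K i)]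
    {x y : ∀ i, K i} (h : ∀ i, x i ≠ 0 ∨ y i ≠ 0) : IsCoprime x y := by
  classical
  refine ⟨fun i => if x i = 0 then 0 else (x i)⁻¹, fun i => if x i = 0 then (y i)⁻¹ else 0,
    funext fun i => ?_⟩
  by_cases hx : x i = 0
  · simp [hx, inv_mul_cancel₀ ((h i).resolve_left (not_not.mpr hx))]
  · simp [hx]

lemma Finset.prod_erase_le_prod_erase {ι : Type*} [DecidableEq ι] (s : Finset ι) (f : ι → ℕ)
    {j k : ι} (hj : j ∈ s) (hk : k ∈ s) (hjk : f j ≤ f k) :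
    ∏ i ∈ s.erase k, f i ≤ ∏ i ∈ s.erase j, f i := by
  rcases eq_or_ne j k with rfl | hne
  · rfl
  rw [← mul_prod_erase _ _ (mem_erase.mpr ⟨hne, hj⟩),
    ← mul_prod_erase _ _ (mem_erase.mpr ⟨hne.symm, hk⟩), erase_right_comm]
  exact Nat.mul_le_mul_right _ hjk

namespace SimpleGraph

variable {V : Type*} {G : SimpleGraph V}

lemma connected_of_forall_reachable (u : V) (h : ∀ v, G.Reachable v u) : G.Connected :=
  haveI : Nonempty V := ⟨u⟩
  ⟨fun a b => (h a).trans (h b).symm⟩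

lemma gdiam_le_of_forall_walk_length_le (u : V) {k : ℕ}
    (h : ∀ v, ∃ w : G.Walk v u, w.length ≤ k) : gdiam G ≤ 2 * k := by
  refine csSup_le' ?_
  rintro d ⟨a, b, rfl⟩
  obtain ⟨wa, ha⟩ := h a
  obtain ⟨wb, hb⟩ := h b
  have := G.dist_le (wa.append wb.reverse)
  rw [Walk.length_append, Walk.length_reverse] at this
  omega

end SimpleGraph

section ZeroSet

variable {m : ℕ} {p : Fin m → ℕ}

open scoped Function in
lemma pairwise_coprime_of_prime (hp : ∀ i, (p i).Prime) (hinj : Function.Injective p) :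
    Pairwise (Nat.Coprime on p) :=
  fun i j hij => (Nat.coprime_primes (hp i) (hp j)).mpr (hinj.ne hij)

noncomputable abbrev crtEquiv (hp : ∀ i, (p i).Prime) (hinj : Function.Injective p) :
    ZMod (NN m p) ≃+* Π i, ZMod (p i) :=
  ZMod.prodEquivPi p (pairwise_coprime_of_prime hp hinj)

lemma mem_Z_iff (hp : ∀ i, (p i).Prime) (hinj : Function.Injective p)
    {x : ZMod (NN m p)} {i : Fin m} : i ∈ Z m p x ↔ crtEquiv hp hinj x i = 0 := by
  simp only [Z, mem_filter, mem_univ, true_and, ZMod.prodEquivPi_apply]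

lemma Z_eq_univ_iff (hp : ∀ i, (p i).Prime) (hinj : Function.Injective p)
    {x : ZMod (NN m p)} : Z m p x = univ ↔ x = 0 := by
  rw [← (crtEquiv hp hinj).map_eq_zero_iff, funext_iff, eq_univ_iff_forall]
  simp only [mem_Z_iff hp hinj, Pi.zero_apply]

lemma Z_eq_empty_iff (hp : ∀ i, (p i).Prime) (hinj : Function.Injective p)
    {x : ZMod (NN m p)} : Z m p x = ∅ ↔ IsUnit x := by
  have := fun i => Fact.mk (hp i)
  rw [← isUnit_map_iff (crtEquiv hp hinj), Pi.isUnit_iff, eq_empty_iff_forall_notMem]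
  simp only [mem_Z_iff hp hinj, isUnit_iff_ne_zero]

lemma span_pair_eq_top_of_disjoint (hp : ∀ i, (p i).Prime) (hinj : Function.Injective p)
    {x y : ZMod (NN m p)} (h : Disjoint (Z m p x) (Z m p y)) :
    Ideal.span {x, y} = ⊤ := by
  have := fun i => Fact.mk (hp i)
  have hcop : IsCoprime (crtEquiv hp hinj x) (crtEquiv hp hinj y) := by
    refine Pi.isCoprime_of_forall_ne_zero fun i => ?_
    by_contra! hxy
    exact disjoint_left.mp h ((mem_Z_iff hp hinj).mpr hxy.1) ((mem_Z_iff hp hinj).mpr hxy.2)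
  obtain ⟨a, b, hab⟩ := hcop.map (crtEquiv hp hinj).symm.toRingHom
  rw [Ideal.eq_top_iff_one, Ideal.mem_span_pair]
  exact ⟨a, b, by simpa using hab⟩

lemma ncard_setOf_Z_eq (hp : ∀ i, (p i).Prime) (hinj : Function.Injective p)
    (S : Finset (Fin m)) : {x : ZMod (NN m p) | Z m p x = S}.ncard = ∏ i ∈ Sᶜ, (p i - 1) := by
  have : NeZero (NN m p) := ⟨prod_ne_zero_iff.mpr fun i _ => (hp i).ne_zero⟩
  have := fun i => NeZero.mk (hp i).ne_zero
  let t : ∀ i, Finset (ZMod (p i)) := fun i => if i ∈ S then {0} else {0}ᶜ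
  calc {x : ZMod (NN m p) | Z m p x = S}.ncard
      = #{x : ZMod (NN m p) | Z m p x = S} := by
        rw [← Set.ncard_coe_finset, coe_filter_univ]
    _ = #(Fintype.piFinset t) := by
        refine card_equiv (crtEquiv hp hinj).toEquiv fun x => ?_
        simp only [mem_filter, mem_univ, true_and, Fintype.mem_piFinset, Finset.ext_iff,
          mem_Z_iff hp hinj, RingEquiv.toEquiv_eq_coe, EquivLike.coe_coe]
        refine forall_congr' fun i => ?_
        by_cases hi : i ∈ S <;> simp [t, hi]
    _ = ∏ i ∈ Sᶜ, (p i - 1) := by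
        simp only [Fintype.card_piFinset, t, apply_ite card, card_singleton, card_compl, ZMod.card]
        rw [prod_ite, prod_const_one, one_mul, filter_notMem_eq_sdiff, compl_eq_univ_sdiff]

end ZeroSet

section Vertices

variable {m : ℕ} {p : Fin m → ℕ}

lemma Z_ne_univ (hp : ∀ i, (p i).Prime) (hinj : Function.Injective p) (v : Vtx m p) :
    Z m p v.1 ≠ univ :=
  (Z_eq_univ_iff hp hinj).not.mpr v.2.1

lemma Z_nonempty (hp : ∀ i, (p i).Prime) (hinj : Function.Injective p) (v : Vtx m p) :
    (Z m p v.1).Nonempty :=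
  nonempty_iff_ne_empty.mpr ((Z_eq_empty_iff hp hinj).not.mpr v.2.2)

lemma G2_adj_of_disjoint (hp : ∀ i, (p i).Prime) (hinj : Function.Injective p) {x y : Vtx m p}
    (h : Disjoint (Z m p x.1) (Z m p y.1)) : (G2 m p).Adj x y := by
  refine ⟨?_, span_pair_eq_top_of_disjoint hp hinj h⟩
  rintro rfl
  exact (Z_nonempty hp hinj x).ne_empty (disjoint_self.mp h)

lemma G2_adj_of_mem_XS_singleton (hp : ∀ i, (p i).Prime) (hinj : Function.Injective p)
    {v u : Vtx m p} {j : Fin m} (hu : u ∈ XS m p {j}) (hj : j ∉ Z m p v.1) :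
    (G2 m p).Adj v u := by
  refine G2_adj_of_disjoint hp hinj ?_
  rw [show Z m p u.1 = {j} from hu]
  exact disjoint_singleton_right.mpr hj

lemma ncard_XS (hp : ∀ i, (p i).Prime) (hinj : Function.Injective p) {S : Finset (Fin m)}
    (hS : S.Nonempty) (hSu : S ≠ univ) : (XS m p S).ncard = ∏ i ∈ Sᶜ, (p i - 1) := by
  rw [← ncard_setOf_Z_eq hp hinj S]
  refine Set.ncard_preimage_of_injective_subset_range (s := {x | Z m p x = S})
    Subtype.val_injective fun x (hx : Z m p x = S) => ?_
  refine ⟨⟨x, ?_, ?_⟩, rfl⟩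
  · rwa [ne_eq, ← Z_eq_univ_iff hp hinj, hx]
  · rwa [← Z_eq_empty_iff hp hinj, hx, ← ne_eq, ← nonempty_iff_ne_empty]

lemma exists_mem_XS_singleton_notMem (hp : ∀ i, (p i).Prime) (hinj : Function.Injective p)
    (hm : 2 ≤ m) (j : Fin m) {W : Set (Vtx m p)}
    (hW : W.ncard < ∏ i ∈ univ.erase j, (p i - 1)) : ∃ u ∈ XS m p {j}, u ∉ W := by
  have : NeZero (NN m p) := ⟨prod_ne_zero_iff.mpr fun i _ => (hp i).ne_zero⟩
  have : Nontrivial (Fin m) := Fin.nontrivial_iff_two_le.mpr hm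
  obtain ⟨k, hk⟩ := exists_ne j
  have hj : ({j} : Finset (Fin m)) ≠ univ := fun h => hk (mem_singleton.mp (h ▸ mem_univ k))
  refine Set.exists_mem_notMem_of_ncard_lt_ncard ?_
  rwa [ncard_XS hp hinj (singleton_nonempty j) hj, compl_singleton]

end Vertices

open SimpleGraph in
lemma exists_walk_induce_length_le_two {m : ℕ} {p : Fin m → ℕ} (hp : ∀ i, (p i).Prime)
    (hinj : Function.Injective p) {W : Set (Vtx m p)} (hX : ∀ k, ∃ w ∈ XS m p {k}, w ∉ W)
    {j : Fin m} {u : Vtx m p} (hu : u ∈ XS m p {j}) (huW : u ∉ W) (v : ↥Wᶜ) :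
    ∃ w : ((G2 m p).induce Wᶜ).Walk v ⟨u, huW⟩, w.length ≤ 2 := by
  by_cases hj : j ∈ Z m p v.1.1
  · obtain ⟨k, hk⟩ : ∃ k, k ∉ Z m p v.1.1 := by
      by_contra! h
      exact Z_ne_univ hp hinj v (eq_univ_of_forall h)
    obtain ⟨w, hw, hwW⟩ := hX k
    have hjw : j ∉ Z m p w.1 := by
      rw [show Z m p w.1 = {k} from hw, mem_singleton]
      rintro rfl
      exact hk hj
    exact ⟨.cons (v := ⟨w, hwW⟩) (induce_adj.mpr (G2_adj_of_mem_XS_singleton hp hinj hw hk))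
      (induce_adj.mpr (G2_adj_of_mem_XS_singleton hp hinj hu hjw)).toWalk, le_rfl⟩
  · exact ⟨(induce_adj.mpr (G2_adj_of_mem_XS_singleton hp hinj hu hj)).toWalk, by simp⟩

theorem stmt19 (m : ℕ) (hm : 3 ≤ m) (p : Fin m → ℕ) (hp : ∀ i, (p i).Prime)
    (hmono : StrictMono p) (W : Set (Vtx m p))
    (hW : W.ncard < ∏ i ∈ Finset.univ.erase (⟨m - 1, by omega⟩ : Fin m), (p i - 1)) :
    ((G2 m p).induce Wᶜ).Connected ∧
    (∀ v : ↥(Wᶜ), ∃ u : ↥(Wᶜ), (u : Vtx m p) ∈ XS m p {(⟨m - 1, by omega⟩ : Fin m)} ∧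
      ((G2 m p).induce Wᶜ).dist v u ≤ 2) ∧
    gdiam ((G2 m p).induce Wᶜ) ≤ 4 := by
  have hinj := hmono.injective
  have hX : ∀ k, ∃ w ∈ XS m p {k}, w ∉ W := fun k =>
    exists_mem_XS_singleton_notMem hp hinj (by omega) k <| hW.trans_le <|
      prod_erase_le_prod_erase _ _ (mem_univ _) (mem_univ _) <|
        Nat.sub_le_sub_right (hmono.monotone (Fin.mk_le_mk.mpr (by omega))) 1
  obtain ⟨u, hu, huW⟩ := hX ⟨m - 1, by omega⟩
  choose walk hwalk using exists_walk_induce_length_le_two hp hinj hX hu huW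
  exact ⟨SimpleGraph.connected_of_forall_reachable _ fun v => (walk v).reachable,
    fun v => ⟨_, hu, (SimpleGraph.dist_le _).trans (hwalk v)⟩,
    SimpleGraph.gdiam_le_of_forall_walk_length_le _ fun v => ⟨walk v, hwalk v⟩⟩
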